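/- arXiv:1407.8287 — 3 statements merged into one kernel-verified Lean document; each statement's English description precedes it below -/
import Mathlib

section
/- Let q ≥ 2 and b ≥ 2 be integers, let (x_n)_{n≥0} be the van der Corput sequence in base b, and for k ∈ ℕ set T_k(N) := (1/N) Σ_{n=0}^{N−1} exp(2πi · s_q(n) · φ_b(k)), where φ_b is the radical inverse function. Then for every m ∈ ℕ₀, T_k(q^m) = (T_k(q))^m. -/
open Finset Real

/-- The radical inverse function `φ_b` in base `b`. -/
noncomputable def radInv (b n : ℕ) : ℝ :=
  ∑ i ∈ Finset.range (Nat.digits b n).length,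
    ((Nat.digits b n).getD i 0 : ℝ) / (b : ℝ) ^ (i + 1)

/-- `T_k(N) = (1/N) Σ_{n=0}^{N−1} exp(2πi · s_q(n) · φ_b(k))`. -/
noncomputable def Texp (q b k N : ℕ) : ℂ :=
  (N : ℂ)⁻¹ * ∑ n ∈ Finset.range N,
    Complex.exp (2 * Real.pi * Complex.I * ((Nat.digits q n).sum : ℂ) * (radInv b k : ℂ))

/-! The summand `n ↦ exp(2πi s_q(n) φ_b(k))` is `q`-multiplicative, `f (a + q r) = f a * f r`
for every digit `a < q`, since `s_q (a + q r) = a + s_q r`. Splitting `n < q^(m+1)` as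
`a + q r` with `a < q`, `r < q^m` therefore factors the sum over `[0, q^(m+1))` into the sums
over `[0, q)` and `[0, q^m)`. -/

theorem Nat.digits_sum_add_mul {q a : ℕ} (hq : 1 < q) (ha : a < q) (r : ℕ) :
    (Nat.digits q (a + q * r)).sum = (Nat.digits q a).sum + (Nat.digits q r).sum := by
  obtain rfl | ha0 := eq_or_ne a 0
  · obtain rfl | hr0 := eq_or_ne r 0
    · simp
    · rw [Nat.digits_add q hq 0 r ha (.inr hr0)]
      simp
  · rw [Nat.digits_add q hq a r ha (.inl ha0), Nat.digits_of_lt q a ha0 ha]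
    simp

theorem Finset.sum_range_mul_eq_sum_sum {M : Type*} [AddCommMonoid M] (f : ℕ → M) (q N : ℕ) :
    ∑ n ∈ range (q * N), f n = ∑ r ∈ range N, ∑ a ∈ range q, f (a + q * r) := by
  induction N with
  | zero => simp
  | succ N ih =>
    rw [Nat.mul_succ, sum_range_add, ih, sum_range_succ]
    simp only [add_comm]

theorem Finset.sum_range_pow_eq_pow_sum {R : Type*} [CommSemiring R] {q : ℕ} {f : ℕ → R}
    (hf₀ : f 0 = 1) (hf : ∀ a < q, ∀ r, f (a + q * r) = f a * f r) (m : ℕ) :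
    ∑ n ∈ range (q ^ m), f n = (∑ a ∈ range q, f a) ^ m := by
  induction m with
  | zero => simp [hf₀]
  | succ m ih =>
    calc ∑ n ∈ range (q ^ (m + 1)), f n
        = ∑ r ∈ range (q ^ m), ∑ a ∈ range q, f a * f r := by
          rw [pow_succ', sum_range_mul_eq_sum_sum]
          exact sum_congr rfl fun r _ ↦ sum_congr rfl fun a ha ↦ hf a (mem_range.mp ha) r
      _ = (∑ a ∈ range q, f a) ^ (m + 1) := by
          rw [sum_comm, ← sum_mul_sum, ih, pow_succ']

theorem Texp_pow_general (q b : ℕ) (hq : 2 ≤ q) (k : ℕ) (m : ℕ) :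
    Texp q b k (q ^ m) = (Texp q b k q) ^ m := by
  set f : ℕ → ℂ := fun n ↦
    Complex.exp (2 * Real.pi * Complex.I * ((Nat.digits q n).sum : ℂ) * (radInv b k : ℂ))
  have hf : ∀ a < q, ∀ r, f (a + q * r) = f a * f r := by
    intro a ha r
    simp only [f, Nat.digits_sum_add_mul hq ha, Nat.cast_add, ← Complex.exp_add]
    ring_nf
  have hf₀ : f 0 = 1 := by simp [f]
  rw [Texp, Texp, sum_range_pow_eq_pow_sum hf₀ hf, Nat.cast_pow, mul_pow, inv_pow]

/-- For the van der Corput sequence `x_n = φ_b(n)` in base `b ≥ 2` and the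
exponential sums `T_k` along the `q`-ary sum-of-digits function, one has
`T_k(q^m) = (T_k(q))^m` for every `m`. -/
theorem Texp_pow (q b : ℕ) (hq : 2 ≤ q) (hb : 2 ≤ b) (k : ℕ) (m : ℕ) :
    Texp q b k (q ^ m) = (Texp q b k q) ^ m :=
  Texp_pow_general q b hq k m
end

section
/- Let q ≥ 2 be an integer and θ ∈ ℝ. Then |(1/q) Σ_{n=0}^{q−1} exp(2πi n θ)|² ≤ 1 − (16(q−1)/q²)·‖θ‖², where ‖θ‖ denotes the distance from θ to the nearest integer. -/
open Finset Real

/-! With `z = exp (2πiθ)` and `S k = ∑_{n<k} z ^ n`, one has `S (k + 1) = z * S k + 1`, and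
`Re (z * S k) ≤ Re z + (k - 1)` since every power of `z` besides `z` itself has real part at most 1.
So each step loses `2 (1 - Re z) = 2 (1 - cos 2πθ)` against the trivial bound `(k + 1)²`, and
Jordan's inequality `cos x ≤ 1 - 2x²/π²` on `[-π, π]`, applied after reducing `θ` modulo 1, gives
`1 - cos 2πθ ≥ 8‖θ‖²`. -/

theorem cos_two_pi_mul_le_one_sub_eight_mul_sq_abs_sub_round (θ : ℝ) :
    cos (2 * π * θ) ≤ 1 - 8 * |θ - round θ| ^ 2 := by
  have hperiodic : cos (2 * π * θ) = cos (2 * π * (θ - round θ)) := by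
    rw [mul_sub, ← cos_sub_int_mul_two_pi (2 * π * θ) (round θ)]
    ring_nf
  have hjordan := cos_le_one_sub_mul_cos_sq (x := 2 * π * (θ - round θ)) <| by
    rw [abs_mul, abs_of_pos two_pi_pos]
    nlinarith [abs_sub_round θ, pi_pos]
  rw [hperiodic]
  convert hjordan using 2
  rw [sq_abs]
  field_simp
  ring

theorem Complex.norm_sq_geom_sum_succ_le {z : ℂ} (hz : ‖z‖ ≤ 1) (m : ℕ) :
    ‖∑ n ∈ range (m + 1), z ^ n‖ ^ 2 ≤ ((m : ℝ) + 1) ^ 2 - 2 * m * (1 - z.re) := by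
  induction m with
  | zero => simp
  | succ m ih =>
    set S := ∑ n ∈ range (m + 1), z ^ n
    have hshift : ∑ n ∈ range (m + 1 + 1), z ^ n = z * S + 1 := by
      rw [sum_range_succ', mul_sum]
      simp only [pow_succ', pow_zero]
    have hnorm : ‖z * S‖ ^ 2 ≤ ‖S‖ ^ 2 := by
      rw [norm_mul, mul_pow]
      exact mul_le_of_le_one_left (by positivity) (pow_le_one₀ (norm_nonneg z) hz)
    have hre : (z * S).re ≤ z.re + m := by
      have hpow : ∀ n ∈ range m, (z ^ (n + 2)).re ≤ 1 := fun n _ =>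
        (re_le_norm _).trans (by rw [norm_pow]; exact pow_le_one₀ (norm_nonneg z) hz)
      rw [mul_sum, re_sum, sum_range_succ']
      simp only [← pow_succ', pow_zero, mul_one]
      have hsum := sum_le_sum hpow
      rw [sum_const, card_range, nsmul_one] at hsum
      linarith
    have hexpand : ‖z * S + 1‖ ^ 2 = ‖z * S‖ ^ 2 + 2 * (z * S).re + 1 := by
      simp only [Complex.sq_norm, Complex.normSq_add, map_one, mul_one]
      ring
    rw [hshift, hexpand]
    push_cast
    nlinarith

/-- For an integer `q ≥ 2` and `θ ∈ ℝ`,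
`|(1/q) Σ_{n=0}^{q−1} exp(2πi n θ)|² ≤ 1 − (16(q−1)/q²)·‖θ‖²`,
where `‖θ‖ = |θ − round θ|` is the distance from `θ` to the nearest integer. -/
theorem abs_sq_exponential_sum_le (q : ℕ) (hq : 2 ≤ q) (θ : ℝ) :
    (‖(q : ℂ)⁻¹ * ∑ n ∈ Finset.range q,
        Complex.exp (2 * Real.pi * Complex.I * (n : ℂ) * (θ : ℂ))‖) ^ 2 ≤
      1 - 16 * ((q : ℝ) - 1) / (q : ℝ) ^ 2 * |θ - round θ| ^ 2 := by
  obtain ⟨m, rfl⟩ : ∃ m, q = m + 1 := ⟨q - 1, by omega⟩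
  set z := Complex.exp ((2 * π * θ : ℝ) * Complex.I)
  have hpow (n : ℕ) : Complex.exp (2 * π * Complex.I * n * θ) = z ^ n := by
    rw [← Complex.exp_nat_mul]
    push_cast
    ring_nf
  have hgeom := Complex.norm_sq_geom_sum_succ_le (Complex.norm_exp_ofReal_mul_I (2 * π * θ)).le m
  rw [Complex.exp_ofReal_mul_I_re] at hgeom
  have hbound : ‖∑ n ∈ range (m + 1), z ^ n‖ ^ 2 ≤ ((m : ℝ) + 1) ^ 2 - 16 * m * |θ - round θ| ^ 2 := by
    nlinarith [cos_two_pi_mul_le_one_sub_eight_mul_sq_abs_sub_round θ, m.cast_nonneg (α := ℝ)]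
  simp only [hpow, norm_mul, norm_inv, mul_pow, Complex.norm_natCast]
  push_cast
  rw [inv_pow, ← div_eq_inv_mul, div_le_iff₀ (by positivity)]
  refine hbound.trans_eq ?_
  field_simp
  ring
end

section
/- Let b ≥ 2, j ∈ ℕ, and let α₁, …, α_{j−1}, k ∈ {0, …, b−1}. Let J := [Σ_{r=1}^{j−1} α_r/b^r + k/b^j, Σ_{r=1}^{j−1} α_r/b^r + (k+1)/b^j). Then for v ∈ ℕ₀ with base-b digits v₀, v₁, v₂, …, the radical inverse φ_b(v) lies in J if and only if (v₀, …, v_{j−2}, v_{j−1}) = (α₁, …, α_{j−1}, k); equivalently, φ_b(v) ∈ J iff v ≡ R (mod b^j) for the unique R ∈ {0,…,b^j−1} with these first j digits. -/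
/-!
Multiplying by `b ^ j`, the interval condition says that `⌊b ^ j * φ_b(v)⌋` is the integer whose
base-`b` digits are the prescribed ones, read in reverse. Splitting the digit expansion of `v`
after `j` places gives `b ^ j * φ_b(v) = d + φ_b(v / b ^ j)`, where `d` is the reversed number
formed by the first `j` digits of `v`; since `0 ≤ φ_b < 1`, the floor is `d`. Uniqueness of
base-`b` representations then identifies the digits, and the residue form follows from
`v % b ^ j = ∑_{i<j} v_i b ^ i` in the same way.
-/

open Finset

/-- The `i`-th base-`b` digit of `v` (starting from `i = 0`). -/
def digit (b v i : ℕ) : ℕ := (Nat.digits b v).getD i 0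

section
variable {b : ℕ}

lemma digit_eq_div_pow_mod (hb : 2 ≤ b) (v i : ℕ) : digit b v i = v / b ^ i % b :=
  Nat.getD_digits v i hb

lemma digit_lt (hb : 2 ≤ b) (v i : ℕ) : digit b v i < b := by
  rw [digit_eq_div_pow_mod hb]
  exact Nat.mod_lt _ (by omega)

lemma digit_div_pow (hb : 2 ≤ b) (v j i : ℕ) : digit b (v / b ^ j) i = digit b v (j + i) := by
  rw [digit_eq_div_pow_mod hb, digit_eq_div_pow_mod hb, Nat.div_div_eq_div_mul, ← pow_add]

lemma mod_pow_eq_sum_digit (hb : 2 ≤ b) (v j : ℕ) :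
    v % b ^ j = ∑ i ∈ range j, digit b v i * b ^ i := by
  induction j with
  | zero => simp [Nat.mod_one]
  | succ j ih => rw [Nat.mod_pow_succ, sum_range_succ, ih, digit_eq_div_pow_mod hb, mul_comm]

lemma sum_mul_pow_eq_iff (hb : 0 < b) {j : ℕ} {e f : ℕ → ℕ} (he : ∀ i < j, e i < b)
    (hf : ∀ i < j, f i < b) :
    ∑ i ∈ range j, e i * b ^ i = ∑ i ∈ range j, f i * b ^ i ↔ ∀ i < j, e i = f i := by
  induction j generalizing e f with
  | zero => simp
  | succ j ih =>
    have peel (g : ℕ → ℕ) : ∑ i ∈ range (j + 1), g i * b ^ i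
        = g 0 + b * ∑ i ∈ range j, g (i + 1) * b ^ i := by
      rw [sum_range_succ', mul_sum, add_comm]
      simp only [pow_succ, pow_zero, mul_one, mul_left_comm b, mul_comm b]
    rw [peel e, peel f, Nat.forall_lt_succ_left, ← ih (fun i hi => he _ (by omega))
      (fun i hi => hf _ (by omega))]
    constructor
    · intro h
      obtain ⟨hdiv, hmod⟩ := (Nat.div_mod_unique hb).2 ⟨h, he 0 (by omega)⟩
      obtain ⟨hdiv', hmod'⟩ := (Nat.div_mod_unique hb).2 ⟨rfl, hf 0 (by omega)⟩
      exact ⟨hmod.symm.trans hmod', hdiv.symm.trans hdiv'⟩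
    · rintro ⟨h0, hrest⟩
      rw [h0, hrest]

lemma sum_mul_pow_reflect_eq_iff (hb : 0 < b) {j : ℕ} {e f : ℕ → ℕ} (he : ∀ i < j, e i < b)
    (hf : ∀ i < j, f i < b) :
    ∑ i ∈ range j, e i * b ^ (j - 1 - i) = ∑ i ∈ range j, f i * b ^ (j - 1 - i) ↔
      ∀ i < j, e i = f i := by
  have reflect (g : ℕ → ℕ) : ∑ i ∈ range j, g i * b ^ (j - 1 - i)
      = ∑ i ∈ range j, g (j - 1 - i) * b ^ i := by
    rw [← sum_range_reflect]
    refine sum_congr rfl fun i hi => ?_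
    rw [Nat.sub_sub_self (by simp at hi; omega)]
  rw [reflect e, reflect f, sum_mul_pow_eq_iff hb (fun i hi => he _ (by omega))
    (fun i hi => hf _ (by omega))]
  refine ⟨fun h i hi => ?_, fun h i hi => h _ (by omega)⟩
  simpa [Nat.sub_sub_self (by omega : i ≤ j - 1)] using h (j - 1 - i) (by omega)

lemma radInv_eq_sum_range {v N : ℕ} (hN : (Nat.digits b v).length ≤ N) :
    radInv b v = ∑ i ∈ range N, (digit b v i : ℝ) / (b : ℝ) ^ (i + 1) := by
  refine sum_subset (range_subset_range.2 hN) fun i _ hi => ?_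
  rw [List.getD_eq_default _ _ (by simpa using hi)]
  simp

lemma radInv_nonneg (v : ℕ) : 0 ≤ radInv b v :=
  sum_nonneg fun _ _ => by positivity

lemma sum_div_pow_succ_le (hb : 0 < b) {m : ℕ} {e : ℕ → ℕ} (he : ∀ i < m, e i < b) :
    ∑ i ∈ range m, (e i : ℝ) / (b : ℝ) ^ (i + 1) ≤ 1 - 1 / (b : ℝ) ^ m := by
  induction m with
  | zero => simp
  | succ m ih =>
    have hem : (e m : ℝ) ≤ b - 1 := by
      have := he m (by omega)
      rw [le_sub_iff_add_le]
      exact_mod_cast this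
    calc ∑ i ∈ range (m + 1), (e i : ℝ) / (b : ℝ) ^ (i + 1)
        ≤ 1 - 1 / (b : ℝ) ^ m + (b - 1) / (b : ℝ) ^ (m + 1) := by
          rw [sum_range_succ]
          gcongr
          exact ih fun i hi => he i (by omega)
      _ = 1 - 1 / (b : ℝ) ^ (m + 1) := by
          field_simp
          ring

lemma radInv_lt_one (hb : 2 ≤ b) (v : ℕ) : radInv b v < 1 := by
  rw [radInv_eq_sum_range le_rfl]
  calc _ ≤ 1 - 1 / (b : ℝ) ^ (Nat.digits b v).length :=
        sum_div_pow_succ_le (by omega) fun i _ => digit_lt hb v i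
    _ < 1 := by
        have : (0 : ℝ) < b := by exact_mod_cast (by omega : 0 < b)
        linarith [one_div_pos.2 (pow_pos this (Nat.digits b v).length)]

lemma pow_mul_sum_div_pow_succ (hb : b ≠ 0) (j : ℕ) (e : ℕ → ℕ) :
    (b : ℝ) ^ j * ∑ i ∈ range j, (e i : ℝ) / (b : ℝ) ^ (i + 1)
      = ((∑ i ∈ range j, e i * b ^ (j - 1 - i) : ℕ) : ℝ) := by
  push_cast
  rw [mul_sum]
  refine sum_congr rfl fun i hi => ?_
  have hi : i < j := mem_range.1 hi
  rw [show (b : ℝ) ^ j = b ^ (j - 1 - i) * b ^ (i + 1) by rw [← pow_add]; congr 1; omega]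
  field_simp

lemma pow_mul_radInv (hb : 2 ≤ b) (v j : ℕ) :
    (b : ℝ) ^ j * radInv b v
      = ((∑ i ∈ range j, digit b v i * b ^ (j - 1 - i) : ℕ) : ℝ) + radInv b (v / b ^ j) := by
  set N := (Nat.digits b v).length
  have hlen : (Nat.digits b (v / b ^ j)).length ≤ N :=
    Nat.le_length_digits_le _ _ _ (Nat.div_le_self _ _)
  rw [radInv_eq_sum_range (le_add_self : N ≤ j + N), sum_range_add, mul_add,
    pow_mul_sum_div_pow_succ (by omega), radInv_eq_sum_range hlen, mul_sum]
  congr 1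
  refine sum_congr rfl fun i _ => ?_
  have : (b : ℝ) ^ j ≠ 0 := by positivity
  rw [digit_div_pow hb, add_assoc, pow_add]
  field_simp

lemma floor_pow_mul_radInv (hb : 2 ≤ b) (v j : ℕ) :
    ⌊(b : ℝ) ^ j * radInv b v⌋₊ = ∑ i ∈ range j, digit b v i * b ^ (j - 1 - i) := by
  rw [Nat.floor_eq_iff (by positivity [radInv_nonneg (b := b) v]), pow_mul_radInv hb]
  exact ⟨le_add_of_nonneg_right (radInv_nonneg _), by linarith [radInv_lt_one hb (v / b ^ j)]⟩

theorem radInv_mem_Ico_iff (hb : 2 ≤ b) {j : ℕ} {e : ℕ → ℕ} (he : ∀ i < j, e i < b) (v : ℕ) :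
    radInv b v ∈ Set.Ico (∑ i ∈ range j, (e i : ℝ) / (b : ℝ) ^ (i + 1))
        (∑ i ∈ range j, (e i : ℝ) / (b : ℝ) ^ (i + 1) + 1 / (b : ℝ) ^ j) ↔
      ∀ i < j, digit b v i = e i := by
  have hbj : (0 : ℝ) < (b : ℝ) ^ j := by positivity
  rw [Set.mem_Ico, ← mul_le_mul_iff_of_pos_left hbj, ← mul_lt_mul_iff_of_pos_left hbj, mul_add,
    mul_one_div_cancel hbj.ne', pow_mul_sum_div_pow_succ (by omega), ← Nat.floor_eq_iff
    (by positivity [radInv_nonneg (b := b) v]), floor_pow_mul_radInv hb]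
  exact sum_mul_pow_reflect_eq_iff (by omega) (fun i _ => digit_lt hb v i) he

theorem mod_pow_eq_sum_iff (hb : 2 ≤ b) {j : ℕ} {e : ℕ → ℕ} (he : ∀ i < j, e i < b) (v : ℕ) :
    v % b ^ j = ∑ i ∈ range j, e i * b ^ i ↔ ∀ i < j, digit b v i = e i := by
  rw [mod_pow_eq_sum_digit hb]
  exact sum_mul_pow_eq_iff (by omega) (fun i _ => digit_lt hb v i) he

end

lemma sum_Icc_add_eq_sum_range_succ {M : Type*} [AddCommMonoid M] (F : ℕ → ℕ → M)
    (α : ℕ → ℕ) (k m : ℕ) :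
    ∑ r ∈ Icc 1 m, F r (α r) + F (m + 1) k
      = ∑ i ∈ range (m + 1), F (i + 1) (if i < m then α (i + 1) else k) := by
  rw [sum_range_succ, if_neg (lt_irrefl m), ← Ico_add_one_right_eq_Icc, sum_Ico_eq_sum_range]
  congr 1
  refine sum_congr rfl fun i hi => ?_
  rw [if_pos (by simpa using hi), add_comm 1 i]

/-- For `b ≥ 2`, `j ≥ 1`, digits `α₁,…,α_{j−1}, k ∈ {0,…,b−1}` and the
elementary interval `J = [L, L + 1/b^j)` with `L = Σ_{r=1}^{j−1} α_r/b^r + k/b^j`,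
the radical inverse `φ_b(v)` lies in `J` iff the first `j` base-`b` digits of `v` are
`(α₁, …, α_{j−1}, k)`; equivalently, iff `v ≡ R (mod b^j)` for the unique residue `R`
with these first `j` digits. -/
theorem radInv_mem_elementary_interval_iff (b j : ℕ) (hb : 2 ≤ b) (hj : 1 ≤ j)
    (α : ℕ → ℕ) (hα : ∀ r, 1 ≤ r → r ≤ j - 1 → α r < b) (k : ℕ) (hk : k < b) (v : ℕ) :
    (((∑ r ∈ Finset.Icc 1 (j - 1), (α r : ℝ) / (b : ℝ) ^ r) + (k : ℝ) / (b : ℝ) ^ j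
        ≤ radInv b v ∧
      radInv b v <
        (∑ r ∈ Finset.Icc 1 (j - 1), (α r : ℝ) / (b : ℝ) ^ r) + ((k : ℝ) + 1) / (b : ℝ) ^ j)
      ↔ ((∀ i, i < j - 1 → digit b v i = α (i + 1)) ∧ digit b v (j - 1) = k))
    ∧
    (((∑ r ∈ Finset.Icc 1 (j - 1), (α r : ℝ) / (b : ℝ) ^ r) + (k : ℝ) / (b : ℝ) ^ j
        ≤ radInv b v ∧
      radInv b v <
        (∑ r ∈ Finset.Icc 1 (j - 1), (α r : ℝ) / (b : ℝ) ^ r) + ((k : ℝ) + 1) / (b : ℝ) ^ j)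
      ↔ v % b ^ j = (∑ r ∈ Finset.Icc 1 (j - 1), α r * b ^ (r - 1)) + k * b ^ (j - 1)) := by
  obtain ⟨m, rfl⟩ : ∃ m, j = m + 1 := ⟨j - 1, by omega⟩
  set e : ℕ → ℕ := fun i => if i < m then α (i + 1) else k
  have he : ∀ i < m + 1, e i < b := fun i hi => by
    by_cases him : i < m
    · simpa [e, him] using hα (i + 1) (by omega) (by omega)
    · simpa [e, him] using hk
  have hdigits : ((∀ i < m, digit b v i = α (i + 1)) ∧ digit b v m = k) ↔
      ∀ i < m + 1, digit b v i = e i := by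
    rw [Nat.forall_lt_succ_right]
    exact and_congr (forall₂_congr fun i hi => by simp [e, hi]) (by simp [e])
  have hleft := sum_Icc_add_eq_sum_range_succ (fun r a => (a : ℝ) / (b : ℝ) ^ r) α k m
  have hresidue := sum_Icc_add_eq_sum_range_succ (fun r a => a * b ^ (r - 1)) α k m
  simp only [Nat.add_sub_cancel] at hresidue ⊢
  rw [add_div (k : ℝ) 1, ← add_assoc, hleft, hresidue, ← Set.mem_Ico, radInv_mem_Ico_iff hb he,
    mod_pow_eq_sum_iff hb he, hdigits]
  exact ⟨.rfl, .rfl⟩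
end
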